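/- Let n ≥ 1, let m be a unit of ℤ/nℤ, and let M = F_n · P_{(·m)}. For λ ∈ ℂ, let t_λ, s_λ, and f_λ denote the multiplicity of λ as a root of the characteristic polynomial of M, of P_{(·(n−1))}, and of F_n, respectively. Then t_1 + t_{−1} = s_1 = f_1 + f_{−1} and t_i + t_{−i} = s_{−1} = f_i + f_{−i}. -/

import Mathlib

open Matrix Complex Polynomial

/-- The `n × n` Fourier matrix, with entries `F[j,k] = exp(2πi·jk/n)/√n`. -/
noncomputable def Fourier (n : ℕ) : Matrix (ZMod n) (ZMod n) ℂ :=
  Matrix.of fun j k =>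
    ((1 / Real.sqrt n : ℝ) : ℂ) *
      Complex.exp (2 * Real.pi * Complex.I * ((j.val : ℂ) * (k.val : ℂ)) / (n : ℂ))

/-- The permutation matrix of a map `σ`: `P[j,k] = 1` if `j = σ k`, else `0`. -/
def permMat {n : ℕ} (σ : ZMod n → ZMod n) : Matrix (ZMod n) (ZMod n) ℂ :=
  Matrix.of fun j k => if j = σ k then 1 else 0

/-!
Both `F_n · P_{(·m)}` and `F_n` square to `P_{(·(n−1))}`, by orthogonality of the additive
characters of `ℤ/nℤ`. If `A * A = S`, then `det (X² - S) = det (X - A) · det (X + A)`, i.e.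
`χ_S(X²) = χ_A(X) · χ_{-A}(X)`; comparing root multiplicities at `c` with `2c ≠ 0` gives
`mult_S(c²) = mult_A(c) + mult_A(-c)`. Now take `c = 1` and `c = i`.
-/

namespace Polynomial

variable {R : Type*} [CommRing R] [IsDomain R]

theorem rootMultiplicity_comp_X_sq (p : R[X]) {c : R} (hc : 2 * c ≠ 0) :
    (p.comp (X ^ 2)).rootMultiplicity c = p.rootMultiplicity (c ^ 2) := by
  rcases eq_or_ne p 0 with rfl | hp
  · simp
  obtain ⟨q, hpq, hq⟩ := exists_eq_pow_rootMultiplicity_mul_and_not_dvd p hp (c ^ 2)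
  set k := p.rootMultiplicity (c ^ 2)
  set r := (X + C c) ^ k * q.comp (X ^ 2)
  have hfactor : p.comp (X ^ 2) = r * (X - C c) ^ k := by
    have : (X - C (c ^ 2)).comp (X ^ 2) = (X + C c) * (X - C c) := by
      rw [sub_comp, X_comp, C_comp, C_pow]
      ring
    rw [hpq, mul_comp, pow_comp, this, mul_pow]
    ring
  have hr : ¬ r.IsRoot c := by
    have : q.eval (c ^ 2) ≠ 0 := fun h => hq (dvd_iff_isRoot.mpr h)
    simp only [r, IsRoot, eval_mul, eval_pow, eval_add, eval_X, eval_C, eval_comp, ← two_mul]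
    exact mul_ne_zero (pow_ne_zero _ hc) this
  rw [hfactor, rootMultiplicity_mul_X_sub_C_pow fun h => hr (by simp [h]),
    rootMultiplicity_eq_zero hr, zero_add]

end Polynomial

namespace Matrix

variable {ι R : Type*} [Fintype ι] [DecidableEq ι] [CommRing R]

theorem charpoly_comp_eq_det (A : Matrix ι ι R) (q : R[X]) :
    A.charpoly.comp q = (scalar ι q - (C : R →+* R[X]).mapMatrix A).det := by
  change eval₂RingHom C q (charmatrix A).det = _
  rw [RingHom.map_det]
  congr 1
  ext i j
  by_cases hij : i = j <;> simp [charmatrix, hij]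

theorem charpoly_mul_self_comp_X_sq (A : Matrix ι ι R) :
    (A * A).charpoly.comp (X ^ 2) = A.charpoly * (-A).charpoly := by
  have hcomm : Commute (scalar ι (X : R[X])) ((C : R →+* R[X]).mapMatrix A) :=
    scalar_commute _ (fun _ => Commute.all _ _) _
  rw [charpoly_comp_eq_det, charpoly, charpoly, charmatrix, charmatrix, ← det_mul, map_mul,
    map_neg, map_pow, sq, hcomm.mul_self_sub_mul_self_eq', sub_neg_eq_add]

theorem charpoly_comp_neg_X (A : Matrix ι ι R) :
    A.charpoly.comp (-X) = (-1) ^ Fintype.card ι * (-A).charpoly := by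
  rw [charpoly_comp_eq_det, charpoly, charmatrix, ← det_neg, map_neg, map_neg]
  congr 1
  abel

theorem rootMultiplicity_charpoly_neg [IsDomain R] (A : Matrix ι ι R) (c : R) :
    (-A).charpoly.rootMultiplicity c = A.charpoly.rootMultiplicity (-c) := by
  have hunit : ¬ ((-1 : R[X]) ^ Fintype.card ι).IsRoot c := by simp
  have hne : (-1 : R[X]) ^ Fintype.card ι * (-A).charpoly ≠ 0 :=
    mul_ne_zero (fun h => hunit (by simp [h])) (-A).charpoly_monic.ne_zero
  have hmul := rootMultiplicity_mul (x := c) hne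
  rw [rootMultiplicity_eq_zero hunit, zero_add, ← charpoly_comp_neg_X] at hmul
  rw [← hmul]
  simpa using rootMultiplicity_comp_C_mul_X_add_C A.charpoly (-1) 0 c isUnit_one.neg

theorem rootMultiplicity_charpoly_mul_self [IsDomain R] (A : Matrix ι ι R) {c : R}
    (hc : 2 * c ≠ 0) :
    (A * A).charpoly.rootMultiplicity (c ^ 2) =
      A.charpoly.rootMultiplicity c + A.charpoly.rootMultiplicity (-c) := by
  rw [← rootMultiplicity_comp_X_sq _ hc, charpoly_mul_self_comp_X_sq,
    rootMultiplicity_mul (A.charpoly_monic.mul (-A).charpoly_monic).ne_zero,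
    rootMultiplicity_charpoly_neg]

end Matrix

section Fourier

variable {n : ℕ} [NeZero n]

theorem mul_permMat_apply (A : Matrix (ZMod n) (ZMod n) ℂ) (σ : ZMod n → ZMod n)
    (j k : ZMod n) :
    (A * permMat σ) j k = A j (σ k) := by
  simp [mul_apply, permMat, mul_ite]

theorem Fourier_apply (j k : ZMod n) :
    Fourier n j k = ((Real.sqrt n : ℝ) : ℂ)⁻¹ * ZMod.stdAddChar (j * k) := by
  have hval : ((j.val * k.val : ℕ) : ZMod n) = j * k := by simp
  rw [Fourier, of_apply, ← hval, ZMod.stdAddChar_apply, ZMod.toCircle_natCast]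
  push_cast
  rw [one_div]

theorem Fourier_mul_permMat_mul_self (m : (ZMod n)ˣ) :
    (Fourier n * permMat fun k => (m : ZMod n) * k) *
      (Fourier n * permMat fun k => (m : ZMod n) * k) = permMat fun k => -k := by
  have hsqrt : ((Real.sqrt n : ℝ) : ℂ)⁻¹ * ((Real.sqrt n : ℝ) : ℂ)⁻¹ = (n : ℂ)⁻¹ := by
    rw [← mul_inv, ← ofReal_mul, Real.mul_self_sqrt n.cast_nonneg, ofReal_natCast]
  set M := Fourier n * permMat fun k => (m : ZMod n) * k with hM
  ext j l
  have hentry : ∀ k, M j k * M k l =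
      (n : ℂ)⁻¹ * ZMod.stdAddChar (k * ((m : ZMod n) * (j + l))) := by
    intro k
    rw [hM, mul_permMat_apply, mul_permMat_apply, Fourier_apply, Fourier_apply, mul_mul_mul_comm,
      hsqrt, ← AddChar.map_add_eq_mul]
    ring_nf
  have hzero : (m : ZMod n) * (j + l) = 0 ↔ j = -l := by
    rw [Units.mul_right_eq_zero, add_eq_zero_iff_eq_neg]
  rw [mul_apply, Finset.sum_congr rfl fun k _ => hentry k, ← Finset.mul_sum,
    AddChar.sum_mulShift _ (ZMod.isPrimitive_stdAddChar n), ZMod.card, permMat, of_apply]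
  simp [hzero]

end Fourier

theorem eigenvalue_multiplicity_relations
    (n : ℕ) [NeZero n] (m : (ZMod n)ˣ)
    (M : Matrix (ZMod n) (ZMod n) ℂ)
    (hM : M = Fourier n * permMat fun k => (m : ZMod n) * k)
    (t s f : ℂ → ℕ)
    (ht : ∀ lam, t lam = M.charpoly.rootMultiplicity lam)
    (hs : ∀ lam, s lam = (permMat fun k : ZMod n => -k).charpoly.rootMultiplicity lam)
    (hf : ∀ lam, f lam = (Fourier n).charpoly.rootMultiplicity lam) :
    (t 1 + t (-1) = s 1 ∧ s 1 = f 1 + f (-1)) ∧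
    (t Complex.I + t (-Complex.I) = s (-1) ∧ s (-1) = f Complex.I + f (-Complex.I)) := by
  have hmult_of_sq : ∀ A : Matrix (ZMod n) (ZMod n) ℂ, A * A = permMat (fun k => -k) →
      s 1 = A.charpoly.rootMultiplicity 1 + A.charpoly.rootMultiplicity (-1) ∧
      s (-1) = A.charpoly.rootMultiplicity I + A.charpoly.rootMultiplicity (-I) := by
    intro A hA
    rw [hs, hs, ← hA, ← A.rootMultiplicity_charpoly_mul_self (c := 1) (by norm_num),
      ← A.rootMultiplicity_charpoly_mul_self (c := I) (by simp), one_pow, I_sq]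
    exact ⟨rfl, rfl⟩
  have hF : Fourier n * permMat (fun k => ((1 : (ZMod n)ˣ) : ZMod n) * k) = Fourier n := by
    ext j k
    simp [mul_permMat_apply]
  obtain ⟨hM1, hMI⟩ := hmult_of_sq M (hM ▸ Fourier_mul_permMat_mul_self m)
  obtain ⟨hF1, hFI⟩ := hmult_of_sq (Fourier n) (hF ▸ Fourier_mul_permMat_mul_self 1)
  simp only [ht, hf]
  exact ⟨⟨hM1.symm, hF1⟩, hMI.symm, hFI⟩
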